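/- Prefix Property: if Y is a nonempty digit string all of whose digits are 0 or 1 and whose first digit is 1, then for all natural numbers i and j there exists j' such that G(i,j') is the concatenation of Y followed by G(i,j). In words: any string in row i prepended with any string of zeros and ones (beginning with 1) is again a string in row i. -/

import Mathlib

abbrev Digit := Fin 3

/-- Helper for `addTwo`, acting on the reversed (least significant digit first) string:
replace each digit `d` by `d - 1 (mod 3)` up to and including the first digit 0;
if no digit 0 occurs, a digit 0 is first prepended at the most significant end
(and then becomes 2). -/
def addTwoAux : List Digit → List Digit
  | [] => [2]
  | d :: rest => if d = 0 then (d + 2) :: rest else (d + 2) :: addTwoAux rest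

/-- Adding two in base 3/2: all digits at or to the right of the rightmost 0
(including that 0) are decreased by 1 modulo 3; if there is no 0, a 0 is first
prepended. -/
def addTwo (w : List Digit) : List Digit := (addTwoAux w.reverse).reverse

open Fin.NatCast in
/-- Binary representation of `j` (digits 0 and 1, most significant first, no leading
zeros), with `binRep 0 = [0]`. -/
def binRep (j : ℕ) : List Digit :=
  if j = 0 then [0] else (Nat.digits 2 j).reverse.map (fun d => (d : Digit))

/-- The grid: row 0 consists of the binary representations in increasing order, and
each subsequent row is obtained entrywise by adding two in base 3/2. -/
def G : ℕ → ℕ → List Digit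
  | 0, j => binRep j
  | i + 1, j => addTwo (G i j)

/-!
`addTwo` never touches the digits to the left of the rightmost 0 of a word `w`. Hence a prefix
`Y` survives a step, `addTwo (Y ++ w) = Y ++ addTwo w`, as soon as `w` contains a 0. If it does
not, the inserted 0 in `Y ++ 0 :: w` plays the role of the 0 that `addTwo` prepends to `w`, so
`addTwo (Y ++ 0 :: w) = Y ++ addTwo w`. So, by induction on the row, it suffices to realize `Y ++ G i j` or
`(Y ++ [0]) ++ G i j` in row `i`, and both prefixes are again binary words beginning with 1.
In row 0, every binary word beginning with 1 is a binary representation.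
-/

lemma addTwoAux_append_of_zero_mem {u : List Digit} (h : (0 : Digit) ∈ u) (v : List Digit) :
    addTwoAux (u ++ v) = addTwoAux u ++ v := by
  induction u with
  | nil => simp at h
  | cons a u ih =>
    by_cases ha : a = 0
    · simp [addTwoAux, ha]
    · simp [addTwoAux, ha, ih ((List.mem_cons.mp h).resolve_left (Ne.symm ha))]

lemma addTwoAux_append_of_zero_not_mem {u : List Digit} (h : (0 : Digit) ∉ u)
    (v : List Digit) : addTwoAux (u ++ v) = u.map (· + 2) ++ addTwoAux v := by
  induction u with
  | nil => simp
  | cons a u ih =>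
    rw [List.mem_cons, not_or] at h
    simp [addTwoAux, Ne.symm h.1, ih h.2]

lemma addTwo_append_of_zero_mem (Y : List Digit) {w : List Digit} (h : (0 : Digit) ∈ w) :
    addTwo (Y ++ w) = Y ++ addTwo w := by
  simp only [addTwo, List.reverse_append]
  rw [addTwoAux_append_of_zero_mem (List.mem_reverse.mpr h), List.reverse_append,
    List.reverse_reverse]

lemma addTwo_append_zero_cons_of_zero_not_mem (Y : List Digit) {w : List Digit}
    (h : (0 : Digit) ∉ w) : addTwo (Y ++ 0 :: w) = Y ++ addTwo w := by
  have h' : (0 : Digit) ∉ w.reverse := List.mem_reverse.not.mpr h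
  have hw := addTwoAux_append_of_zero_not_mem h' []
  rw [List.append_nil] at hw
  simp only [addTwo, List.reverse_append, List.reverse_cons, List.append_assoc,
    List.singleton_append, hw, addTwoAux_append_of_zero_not_mem h']
  simp [addTwoAux]

open Fin.NatCast in
lemma binRep_of_ne_zero {j : ℕ} (hj : j ≠ 0) :
    binRep j = (Nat.digits 2 j).reverse.map (Nat.cast : ℕ → Digit) := by
  rw [binRep, if_neg hj]
  simp only [bind_pure_comp, List.map_id']
  rfl

lemma mem_binRep {j : ℕ} {d : Digit} (hd : d ∈ binRep j) : d = 0 ∨ d = 1 := by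
  rcases eq_or_ne j 0 with rfl | hj
  · simp_all [binRep]
  · rw [binRep_of_ne_zero hj, List.mem_map] at hd
    obtain ⟨k, hk, rfl⟩ := hd
    have : k < 2 := Nat.digits_lt_base one_lt_two (List.mem_reverse.mp hk)
    interval_cases k <;> decide

lemma exists_binRep_eq {L : List Digit} (h01 : ∀ d ∈ L, d = 0 ∨ d = 1)
    (hhead : L.head? = some 1) : ∃ j, binRep j = L := by
  set ds := L.reverse.map Fin.val with hds
  have hlt : ∀ x ∈ ds, x < 2 := by
    simp only [hds, List.mem_map, List.mem_reverse]
    rintro _ ⟨d, hd, rfl⟩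
    rcases h01 d hd with rfl | rfl <;> decide
  have hlast : ds.getLast? = some 1 := by
    simp [hds, List.getLast?_reverse, hhead]
  have hdigits : Nat.digits 2 (Nat.ofDigits 2 ds) = ds :=
    Nat.digits_ofDigits 2 one_lt_two ds hlt fun hne => by
      simp [List.getLast?_eq_some_getLast hne] at hlast; omega
  have hpos : Nat.ofDigits 2 ds ≠ 0 := fun h0 => by
    rw [h0, Nat.digits_zero] at hdigits
    simp [← hdigits] at hlast
  refine ⟨Nat.ofDigits 2 ds, ?_⟩
  rw [binRep_of_ne_zero hpos, hdigits, hds, ← List.map_reverse, List.reverse_reverse, List.map_map]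
  exact (List.map_congr_left fun d _ => Fin.cast_val_eq_self d).trans (List.map_id L)

theorem prefix_property_general (Y : List Digit)
    (h01 : ∀ d ∈ Y, d = 0 ∨ d = 1) (hhead : Y.head? = some 1) (i j : ℕ) :
    ∃ j' : ℕ, G i j' = Y ++ G i j := by
  induction i generalizing Y with
  | zero =>
    refine exists_binRep_eq (fun d hd => ?_) (by simp [List.head?_append, hhead])
    exact (List.mem_append.mp hd).elim (h01 d) mem_binRep
  | succ i ih =>
    by_cases h : (0 : Digit) ∈ G i j
    · obtain ⟨j', hj'⟩ := ih Y h01 hhead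
      exact ⟨j', by rw [G, hj', addTwo_append_of_zero_mem Y h, G]⟩
    · have hY0 : ∀ d ∈ Y ++ [0], d = 0 ∨ d = 1 := fun d hd =>
        (List.mem_append.mp hd).elim (h01 d) fun hd => .inl (List.mem_singleton.mp hd)
      obtain ⟨j', hj'⟩ := ih (Y ++ [0]) hY0 (by simp [List.head?_append, hhead])
      refine ⟨j', ?_⟩
      rw [G, hj', List.append_assoc, List.singleton_append,
        addTwo_append_zero_cons_of_zero_not_mem Y h, G]

/-- Prefix property: any string in row `i` prepended with any string of zeros and ones
beginning with 1 is again a string in row `i`. -/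
theorem prefix_property (Y : List Digit) (hne : Y ≠ [])
    (h01 : ∀ d ∈ Y, d = 0 ∨ d = 1) (hhead : Y.head? = some 1) (i j : ℕ) :
    ∃ j' : ℕ, G i j' = Y ++ G i j :=
  prefix_property_general Y h01 hhead i j
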